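/- arXiv:2502.07916 — 2 statements merged into one kernel-verified Lean document; each statement's English description precedes it below -/
import Mathlib

section
/- Let q be a prime power and G, H ∈ 𝔽_q^{k×n} be matrices with no zero columns such that G has full row rank k. Let m be a positive integer with m > m_G and m > m_H, and let G', H' ∈ 𝔽_q^{(k+1)×n'} be obtained from G and H by the Construction (with this m). If (G', H') is in SPCE, then (G, H) is in PCE. -/
open scoped Classical

/-- A permutation matrix: exactly one `1` in each row and column, `0` elsewhere. -/
def IsPermMatrix {n : ℕ} {F : Type*} [Field F] (P : Matrix (Fin n) (Fin n) F) : Prop :=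
  ∃ σ : Equiv.Perm (Fin n), ∀ i j, P i j = if i = σ j then 1 else 0

/-- A signed permutation matrix: exactly one nonzero entry in each row and column,
each equal to `1` or `-1`. -/
def IsSignedPermMatrix {n : ℕ} {F : Type*} [Field F] (P : Matrix (Fin n) (Fin n) F) : Prop :=
  ∃ (σ : Equiv.Perm (Fin n)) (ε : Fin n → F),
    (∀ j, ε j = 1 ∨ ε j = -1) ∧ ∀ i j, P i j = if i = σ j then ε j else 0

/-- A monomial matrix: exactly one nonzero entry in each row and column. -/
def IsMonomialMatrix {n : ℕ} {F : Type*} [Field F] (P : Matrix (Fin n) (Fin n) F) : Prop :=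
  ∃ (σ : Equiv.Perm (Fin n)) (d : Fin n → F),
    (∀ j, d j ≠ 0) ∧ ∀ i j, P i j = if i = σ j then d j else 0

/-- Permutation Code Equivalence. -/
def PCE {k n : ℕ} {F : Type*} [Field F] (G H : Matrix (Fin k) (Fin n) F) : Prop :=
  ∃ (S : Matrix (Fin k) (Fin k) F) (P : Matrix (Fin n) (Fin n) F),
    IsUnit S ∧ IsPermMatrix P ∧ S * G * P = H

/-- Signed Permutation Code Equivalence. -/
def SPCE {k n : ℕ} {F : Type*} [Field F] (G H : Matrix (Fin k) (Fin n) F) : Prop :=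
  ∃ (S : Matrix (Fin k) (Fin k) F) (P : Matrix (Fin n) (Fin n) F),
    IsUnit S ∧ IsSignedPermMatrix P ∧ S * G * P = H

/-- Linear Code Equivalence. -/
def LCE {k n : ℕ} {F : Type*} [Field F] (G H : Matrix (Fin k) (Fin n) F) : Prop :=
  ∃ (S : Matrix (Fin k) (Fin k) F) (P : Matrix (Fin n) (Fin n) F),
    IsUnit S ∧ IsMonomialMatrix P ∧ S * G * P = H

/-- The number of column indices `j` such that the `j`-th column of `A` equals `c`. -/
noncomputable def colCount {k n : ℕ} {F : Type*} [Field F]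
    (A : Matrix (Fin k) (Fin n) F) (c : Fin k → F) : ℕ :=
  (Finset.univ.filter fun j : Fin n => (fun i => A i j) = c).card

/-- `m_A`: the maximum number of times a single column appears among the columns of `A`. -/
noncomputable def maxColCount {k n : ℕ} {F : Type*} [Field F] [Fintype F]
    (A : Matrix (Fin k) (Fin n) F) : ℕ :=
  Finset.univ.sup fun c : Fin k → F => colCount A c

/-- The Construction: `A' = [A'_1 | A'_2 | A'_3]` of size `(k+1) × (n + 2nm + 1)`, where
`A'_1` is `A` with a row of ones appended, `A'_2` is `Â` (each column of `A` repeated `m`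
consecutive times) with a row of zeros appended, and `A'_3` has last row all ones and zeros
elsewhere. -/
def construct {k n : ℕ} {F : Type*} [Field F] (A : Matrix (Fin k) (Fin n) F) (m : ℕ) :
    Matrix (Fin (k + 1)) (Fin (n + 2 * (n * m) + 1)) F :=
  fun i j =>
    if hj1 : (j : ℕ) < n then
      -- block A'_1
      if hi : (i : ℕ) < k then A ⟨i, hi⟩ ⟨j, hj1⟩ else 1
    else if hj2 : (j : ℕ) < n + n * m then
      -- block A'_2
      if hi : (i : ℕ) < k then
        A ⟨i, hi⟩ ⟨((j : ℕ) - n) / m, by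
          have hm : 0 < m := by
            rcases Nat.eq_zero_or_pos m with h | h
            · subst h; omega
            · exact h
          exact (Nat.div_lt_iff_lt_mul hm).mpr (by omega)⟩
      else 0
    else
      -- block A'_3
      if (i : ℕ) < k then 0 else 1


private lemma fin_card_ge (N a : ℕ) (h : a ≤ N) :
    ((Finset.univ : Finset (Fin N)).filter fun j : Fin N => a ≤ (j : ℕ)).card = N - a := by
  rw [show N - a = Fintype.card (Fin (N - a)) by simp, ← Finset.card_univ]
  exact Finset.card_bij'
    (fun (j : Fin N) (hj : j ∈ Finset.univ.filter fun j : Fin N => a ≤ (j : ℕ)) =>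
      (⟨(j : ℕ) - a, by simp only [Finset.mem_filter] at hj; omega⟩ : Fin (N - a)))
    (fun (t : Fin (N - a)) _ => (⟨(t : ℕ) + a, by omega⟩ : Fin N))
    (fun j hj => Finset.mem_univ _)
    (fun t ht => by simp only [Finset.mem_filter, Finset.mem_univ, true_and]; omega)
    (fun j hj => by
      simp only [Finset.mem_filter, Finset.mem_univ, true_and] at hj
      apply Fin.ext; simp; omega)
    (fun t ht => by apply Fin.ext; simp)

private lemma fin_card_mid (N a b : ℕ) (hab : a ≤ b) (hbN : b ≤ N) :
    ((Finset.univ : Finset (Fin N)).filter fun j : Fin N => a ≤ (j : ℕ) ∧ (j : ℕ) < b).card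
      = b - a := by
  rw [show b - a = Fintype.card (Fin (b - a)) by simp, ← Finset.card_univ]
  exact Finset.card_bij'
    (fun (j : Fin N) (hj : j ∈ Finset.univ.filter fun j : Fin N => a ≤ (j : ℕ) ∧ (j : ℕ) < b) =>
      (⟨(j : ℕ) - a, by simp only [Finset.mem_filter] at hj; omega⟩ : Fin (b - a)))
    (fun (t : Fin (b - a)) _ => (⟨(t : ℕ) + a, by omega⟩ : Fin N))
    (fun j hj => Finset.mem_univ _)
    (fun t ht => by simp only [Finset.mem_filter, Finset.mem_univ, true_and]; omega)
    (fun j hj => by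
      simp only [Finset.mem_filter, Finset.mem_univ, true_and] at hj
      apply Fin.ext; simp; omega)
    (fun t ht => by apply Fin.ext; simp)

section ConstructLemmas

variable {k n m : ℕ} {F : Type*} [Field F] (A : Matrix (Fin k) (Fin n) F)

private lemma construct_b1_top {j : Fin (n + 2 * (n * m) + 1)} (hj : (j : ℕ) < n) (b : Fin k) :
    construct A m b.castSucc j = A b ⟨j, hj⟩ := by
  simp only [construct]
  rw [dif_pos hj, dif_pos (show ((b.castSucc : Fin (k+1)) : ℕ) < k from b.isLt)]
  congr 1

private lemma construct_b1_last {j : Fin (n + 2 * (n * m) + 1)} (hj : (j : ℕ) < n) :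
    construct A m (Fin.last k) j = 1 := by
  simp only [construct]
  rw [dif_pos hj, dif_neg (by simp)]

private lemma construct_b2_top {j : Fin (n + 2 * (n * m) + 1)} (hj1 : ¬ (j : ℕ) < n)
    (hj2 : (j : ℕ) < n + n * m) (b : Fin k) (hd : ((j : ℕ) - n) / m < n) :
    construct A m b.castSucc j = A b ⟨((j : ℕ) - n) / m, hd⟩ := by
  simp only [construct]
  rw [dif_neg hj1, dif_pos hj2, dif_pos (show ((b.castSucc : Fin (k+1)) : ℕ) < k from b.isLt)]
  congr 1

private lemma construct_b2_last {j : Fin (n + 2 * (n * m) + 1)} (hj1 : ¬ (j : ℕ) < n)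
    (hj2 : (j : ℕ) < n + n * m) :
    construct A m (Fin.last k) j = 0 := by
  simp only [construct]
  rw [dif_neg hj1, dif_pos hj2, dif_neg (by simp)]

private lemma construct_b3 {j : Fin (n + 2 * (n * m) + 1)} (hj : ¬ (j : ℕ) < n + n * m)
    (i : Fin (k + 1)) :
    construct A m i j = if (i : ℕ) < k then 0 else 1 := by
  simp only [construct]
  rw [dif_neg (by omega), dif_neg hj]

private lemma construct_last_mem {j : Fin (n + 2 * (n * m) + 1)} :
    construct A m (Fin.last k) j = 0 ∨ construct A m (Fin.last k) j = 1 := by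
  by_cases h1 : (j : ℕ) < n
  · exact Or.inr (construct_b1_last A h1)
  · by_cases h2 : (j : ℕ) < n + n * m
    · exact Or.inl (construct_b2_last A h1 h2)
    · right; rw [construct_b3 A h2]; simp

end ConstructLemmas

section CountLemmas

open Finset

variable {k n m : ℕ} {F : Type*} [Field F] (A : Matrix (Fin k) (Fin n) F)

private def eVec (k : ℕ) (F : Type*) [Field F] : Fin (k + 1) → F :=
  fun i => if (i : ℕ) < k then 0 else 1

private lemma eVec_last : eVec k F (Fin.last k) = 1 := by simp [eVec]

private lemma eVec_castSucc (b : Fin k) : eVec k F b.castSucc = 0 := by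
  simp [eVec, b.isLt]

private lemma eq_eVec_of (x : Fin (k + 1) → F) (h1 : x (Fin.last k) = 1)
    (h0 : (fun b => x b.castSucc) = (0 : Fin k → F)) : x = eVec k F := by
  funext i
  induction i using Fin.lastCases with
  | last => rw [h1, eVec_last]
  | cast b => rw [congrFun h0 b, eVec_castSucc]; rfl

private lemma count_last_one [Fintype F] (hn : 0 < n) (x : Fin (k + 1) → F)
    (hx1 : x (Fin.last k) = 1) (hxt : (fun b => x b.castSucc) ≠ (0 : Fin k → F)) :
    colCount (construct A m) x ≤ maxColCount A := by
  have key : ∀ j : Fin (n + 2 * (n * m) + 1),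
      (fun i => construct A m i j) = x → (j : ℕ) < n := by
    intro j hcol
    by_contra hnot
    by_cases h2 : (j : ℕ) < n + n * m
    · have hxv := congrFun hcol (Fin.last k)
      rw [construct_b2_last A hnot h2, hx1] at hxv
      exact zero_ne_one hxv
    · apply hxt; funext b
      have hxv := congrFun hcol b.castSucc
      rw [construct_b3 A h2, if_pos (show ((b.castSucc : Fin (k+1)) : ℕ) < k from b.isLt)] at hxv
      rw [← hxv]; rfl
  have hstep : (univ.filter fun j : Fin (n + 2 * (n * m) + 1) =>
      (fun i => construct A m i j) = x).card
      ≤ (univ.filter fun i : Fin n => (fun r => A r i) = fun b => x b.castSucc).card := by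
    refine Finset.card_le_card_of_injOn
      (fun j : Fin (n + 2 * (n * m) + 1) => (⟨(j : ℕ) % n, Nat.mod_lt _ hn⟩ : Fin n)) ?_ ?_
    · intro j hj
      simp only [mem_coe, mem_filter, mem_univ, true_and] at hj ⊢
      have hjn := key j hj
      funext r
      have hxv := congrFun hj r.castSucc
      rw [construct_b1_top A hjn r] at hxv
      rw [← hxv]
      congr 1
      exact Fin.ext (Nat.mod_eq_of_lt hjn)
    · intro j1 h1 j2 h2 heq
      simp only [coe_filter, Set.mem_setOf_eq, mem_univ, true_and] at h1 h2
      have hn1 := key j1 h1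
      have hn2 := key j2 h2
      have := congrArg Fin.val heq
      simp only at this
      rw [Nat.mod_eq_of_lt hn1, Nat.mod_eq_of_lt hn2] at this
      exact Fin.ext this
  rw [colCount]
  refine hstep.trans ?_
  have hle := Finset.le_sup (f := fun c : Fin k → F => colCount A c)
    (Finset.mem_univ (fun b => x b.castSucc))
  simp only [colCount] at hle
  exact hle

private lemma count_last_zero (x : Fin (k + 1) → F) (hx0 : x (Fin.last k) = 0) :
    colCount (construct A m) x ≤ n * m := by
  have hsub : (univ.filter fun j : Fin (n + 2 * (n * m) + 1) =>
      (fun i => construct A m i j) = x)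
      ⊆ univ.filter fun j : Fin (n + 2 * (n * m) + 1) => n ≤ (j : ℕ) ∧ (j : ℕ) < n + n * m := by
    intro j hj
    simp only [mem_filter, mem_univ, true_and] at hj ⊢
    have hlast : construct A m (Fin.last k) j = 0 := by rw [congrFun hj (Fin.last k), hx0]
    constructor
    · by_contra h1; push_neg at h1
      rw [construct_b1_last A h1] at hlast; exact one_ne_zero hlast
    · by_contra h2
      rw [construct_b3 A h2 (Fin.last k)] at hlast
      simp at hlast
  rw [colCount]
  calc _ ≤ _ := Finset.card_le_card hsub
    _ = (n + n * m) - n := fin_card_mid _ n (n + n * m) (by omega) (by omega)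
    _ ≤ n * m := by omega

private lemma count_last_other (x : Fin (k + 1) → F) (h0 : x (Fin.last k) ≠ 0)
    (h1 : x (Fin.last k) ≠ 1) :
    colCount (construct A m) x = 0 := by
  rw [colCount, Finset.card_eq_zero, Finset.eq_empty_iff_forall_notMem]
  intro j hj
  simp only [mem_filter, mem_univ, true_and] at hj
  rcases construct_last_mem A (m := m) (j := j) with h | h <;>
    rw [congrFun hj (Fin.last k)] at h
  · exact h0 h
  · exact h1 h

end CountLemmas

section DsetLemmas

open Finset

variable {k n m : ℕ} {F : Type*} [Field F] (A : Matrix (Fin k) (Fin n) F)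

private noncomputable def Dset (A : Matrix (Fin k) (Fin n) F) (m : ℕ) (x : Fin (k + 1) → F) :
    Finset (Fin (n + 2 * (n * m) + 1)) :=
  Finset.univ.filter fun j =>
    (fun i => construct A m i j) = x ∨ (fun i => construct A m i j) = -x

private lemma neg_apply' (x : Fin (k + 1) → F) (i : Fin (k + 1)) : (-x) i = -(x i) := rfl

private lemma neg_eq_self_of (x : Fin (k + 1) → F) (h : (-1 : F) = 1) : -x = x := by
  funext i
  rw [neg_apply', ← neg_one_mul, h, one_mul]

private lemma Dset_card_le' (x : Fin (k + 1) → F) :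
    (Dset A m x).card ≤ colCount (construct A m) x + colCount (construct A m) (-x) := by
  rw [Dset, Finset.filter_or]
  exact (Finset.card_union_le _ _)

private lemma Dset_self (x : Fin (k + 1) → F) (h : -x = x) :
    Dset A m x = Finset.univ.filter fun j => (fun i => construct A m i j) = x := by
  rw [Dset]
  congr 1
  funext j
  rw [h, or_self]

private lemma neg_one_ne_zero' : (-1 : F) ≠ 0 := by
  intro h
  rw [neg_eq_zero] at h
  exact one_ne_zero h

private lemma Dset_card_le_max [Fintype F] (hn : 0 < n) (x : Fin (k + 1) → F)
    (hx1 : x (Fin.last k) = 1) (hxt : (fun b => x b.castSucc) ≠ (0 : Fin k → F)) :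
    (Dset A m x).card ≤ maxColCount A := by
  by_cases hxx : -x = x
  · rw [Dset_self A x hxx]
    exact count_last_one A hn x hx1 hxt
  · refine (Dset_card_le' A x).trans ?_
    have h2 : colCount (construct A m) (-x) = 0 := by
      apply count_last_other
      · rw [neg_apply', hx1]; exact neg_one_ne_zero'
      · rw [neg_apply', hx1]
        intro hc
        exact hxx (neg_eq_self_of x hc)
    rw [h2, Nat.add_zero]
    exact count_last_one A hn x hx1 hxt

private lemma Dset_card_le_nm [Fintype F] (hn : 0 < n) (hm : 0 < m)
    (hmax : maxColCount A < m) (x : Fin (k + 1) → F)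
    (hxe : x ≠ eVec k F) (hxne : x ≠ -eVec k F) : (Dset A m x).card ≤ n * m := by
  have hmle : m ≤ n * m := Nat.le_mul_of_pos_left m hn
  have htop : ∀ y : Fin (k + 1) → F, y (Fin.last k) = 1 → y ≠ eVec k F →
      (fun b => y b.castSucc) ≠ (0 : Fin k → F) := by
    intro y hy1 hye h0
    exact hye (eq_eVec_of y hy1 h0)
  by_cases hx0 : x (Fin.last k) = 0
  · -- subset of middle block
    have hsub : Dset A m x ⊆ Finset.univ.filter
        fun j : Fin (n + 2 * (n * m) + 1) => n ≤ (j : ℕ) ∧ (j : ℕ) < n + n * m := by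
      intro j hj
      simp only [Dset, mem_filter, mem_univ, true_and] at hj ⊢
      have hlast : construct A m (Fin.last k) j = 0 := by
        rcases hj with hcol | hcol
        · rw [congrFun hcol (Fin.last k), hx0]
        · rw [congrFun hcol (Fin.last k), neg_apply', hx0, neg_zero]
      constructor
      · by_contra h1; push_neg at h1
        rw [construct_b1_last A h1] at hlast; exact one_ne_zero hlast
      · by_contra h2
        rw [construct_b3 A h2 (Fin.last k)] at hlast
        simp at hlast
    calc (Dset A m x).card ≤ _ := Finset.card_le_card hsub
      _ = (n + n * m) - n := fin_card_mid _ n (n + n * m) (by omega) (by omega)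
      _ ≤ n * m := by omega
  · by_cases hx1 : x (Fin.last k) = 1
    · exact ((Dset_card_le_max A hn x hx1 (htop x hx1 hxe)).trans hmax.le).trans hmle
    · by_cases hxm : x (Fin.last k) = -1
      · -- then -x has last coordinate 1
        have hmx1 : (-x) (Fin.last k) = 1 := by rw [neg_apply', hxm, neg_neg]
        have hxx : ¬ (-x = x) := by
          intro hc
          exact hx1 (by rw [← hc, neg_apply', hxm, neg_neg])
        refine (Dset_card_le' A x).trans ?_
        have hc1 : colCount (construct A m) x = 0 := by
          apply count_last_other _ _ hx0 hx1
        have hmxe : (-x) ≠ eVec k F := by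
          intro hc
          exact hxne (by rw [← hc, neg_neg])
        have hc2 : colCount (construct A m) (-x) ≤ maxColCount A :=
          count_last_one A hn (-x) hmx1 (htop (-x) hmx1 hmxe)
        rw [hc1, Nat.zero_add]
        exact (hc2.trans hmax.le).trans hmle
      · refine (Dset_card_le' A x).trans ?_
        have hc1 : colCount (construct A m) x = 0 := count_last_other _ _ hx0 hx1
        have hc2 : colCount (construct A m) (-x) = 0 := by
          apply count_last_other
          · intro hc
            rw [neg_apply', neg_eq_zero] at hc
            exact hx0 hc
          · intro hc
            rw [neg_apply', neg_eq_iff_eq_neg] at hc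
            exact hxm hc
        rw [hc1, hc2]
        omega

private lemma b3_char (hAnz : ∀ j, (fun i => A i j) ≠ 0) :
    Dset A m (eVec k F)
      = Finset.univ.filter fun j : Fin (n + 2 * (n * m) + 1) => ¬ (j : ℕ) < n + n * m := by
  ext j
  simp only [Dset, mem_filter, mem_univ, true_and]
  constructor
  · rintro (hcol | hcol) <;> intro h2
    · by_cases h1 : (j : ℕ) < n
      · apply hAnz ⟨j, h1⟩
        funext r
        have hv := congrFun hcol r.castSucc
        rw [construct_b1_top A h1 r] at hv
        rw [hv, eVec_castSucc]; rfl
      · have hv := congrFun hcol (Fin.last k)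
        rw [construct_b2_last A h1 h2, eVec_last] at hv
        exact zero_ne_one hv
    · by_cases h1 : (j : ℕ) < n
      · apply hAnz ⟨j, h1⟩
        funext r
        have hv := congrFun hcol r.castSucc
        rw [construct_b1_top A h1 r] at hv
        rw [hv, neg_apply', eVec_castSucc, neg_zero]; rfl
      · have hv := congrFun hcol (Fin.last k)
        rw [construct_b2_last A h1 h2, neg_apply', eVec_last] at hv
        exact neg_one_ne_zero' hv.symm
  · intro h2
    left
    funext i
    rw [construct_b3 A h2 i]
    rfl

end DsetLemmas

open Finset in
/-- if `(G', H')` is in SPCE, then `(G, H)` is in PCE. -/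
theorem stmt11 (q k n m : ℕ) (hq : IsPrimePow q) (hk : 0 < k) (hn : 0 < n) (hm : 0 < m)
    (F : Type*) [Field F] [Fintype F] (hF : Fintype.card F = q)
    (G H : Matrix (Fin k) (Fin n) F)
    (hGnz : ∀ j, (fun i => G i j) ≠ 0)
    (hHnz : ∀ j, (fun i => H i j) ≠ 0)
    (hGrank : G.rank = k)
    (hmG : maxColCount G < m) (hmH : maxColCount H < m)
    (h : SPCE (construct G m) (construct H m)) :
    PCE G H := by
  classical
  obtain ⟨S, P, hS, ⟨σ, ε, hε, hP⟩, hmul⟩ := h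
  have hεsq : ∀ j, ε j * ε j = 1 := by
    intro j; rcases hε j with hj | hj <;> rw [hj] <;> ring
  have hεnz : ∀ j, ε j ≠ 0 := by
    intro j hc
    have h0 := hεsq j; rw [hc, mul_zero] at h0; exact zero_ne_one h0
  have hdet : IsUnit S.det := (Matrix.isUnit_iff_isUnit_det S).mp hS
  set T := S⁻¹ with hT
  have hTS : T * S = 1 := Matrix.nonsing_inv_mul S hdet
  have hST : S * T = 1 := Matrix.mul_nonsing_inv S hdet
  -- column relation
  have hcolv : ∀ j, (fun i => construct H m i j)
      = ε j • Matrix.mulVec S (fun t => construct G m t (σ j)) := by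
    intro j
    funext i
    have hij := congrFun (congrFun hmul i) j
    rw [Matrix.mul_apply] at hij
    have hterm : ∀ l, (S * construct G m) i l * P l j
        = if l = σ j then (S * construct G m) i l * ε j else 0 := by
      intro l; rw [hP l j]; split_ifs <;> ring
    rw [Finset.sum_congr rfl (fun l _ => hterm l), Finset.sum_ite_eq'] at hij
    simp only [Finset.mem_univ, if_true] at hij
    rw [← hij]
    simp only [Pi.smul_apply, smul_eq_mul, Matrix.mul_apply, Matrix.mulVec, dotProduct]
    ring
  have hinvv : ∀ j, (fun i => construct G m i (σ j))
      = ε j • Matrix.mulVec T (fun t => construct H m t j) := by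
    intro j
    have h1 : Matrix.mulVec T (fun i => construct H m i j)
        = ε j • (fun i => construct G m i (σ j)) := by
      rw [hcolv j, Matrix.mulVec_smul, Matrix.mulVec_mulVec, hTS, Matrix.one_mulVec]
    rw [h1, smul_smul, hεsq j, one_smul]
  -- STEP 1 : block 3 analysis
  set v : Fin (k + 1) → F := Matrix.mulVec T (eVec k F) with hv
  set B3 : Finset (Fin (n + 2 * (n * m) + 1)) :=
    Finset.univ.filter (fun j => ¬ (j : ℕ) < n + n * m) with hB3
  have hB3card : B3.card = n * m + 1 := by
    have hBeq : B3 = Finset.univ.filter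
        (fun j : Fin (n + 2 * (n * m) + 1) => n + n * m ≤ (j : ℕ)) := by
      rw [hB3]; ext j; simp [not_lt]
    rw [hBeq, fin_card_ge _ (n + n * m) (by omega)]
    omega
  have hcH3 : ∀ j ∈ B3, (fun i => construct H m i j) = eVec k F := by
    intro j hj
    rw [hB3, Finset.mem_filter] at hj
    funext i
    rw [construct_b3 H hj.2 i]
    rfl
  have himg3 : Finset.image σ B3 ⊆ Dset G m v := by
    intro j' hj'
    obtain ⟨j, hj, rfl⟩ := Finset.mem_image.mp hj'
    have h1 := hinvv j
    rw [hcH3 j hj] at h1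
    rw [Dset, Finset.mem_filter]
    refine ⟨Finset.mem_univ _, ?_⟩
    rcases hε j with hs | hs
    · left; rw [h1, hs, one_smul]
    · right; rw [h1, hs, neg_smul, one_smul]
  have hDcard : n * m + 1 ≤ (Dset G m v).card := by
    calc n * m + 1 = B3.card := hB3card.symm
      _ = (Finset.image σ B3).card := (Finset.card_image_of_injective B3 σ.injective).symm
      _ ≤ _ := Finset.card_le_card himg3
  have hve : v = eVec k F ∨ v = -eVec k F := by
    by_contra hc; push_neg at hc
    have := Dset_card_le_nm G hn hm hmG v hc.1 hc.2
    omega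
  have hDeq : Dset G m v = B3 := by
    have h1 : Dset G m v = Dset G m (eVec k F) := by
      rcases hve with hh | hh
      · rw [hh]
      · rw [hh, Dset, Dset]
        ext j
        simp only [Finset.mem_filter, Finset.mem_univ, true_and, neg_neg]
        exact or_comm
    rw [h1, b3_char G hGnz, hB3]
  have himg3' : Finset.image σ B3 = B3 := by
    apply Finset.eq_of_subset_of_card_le
    · exact himg3.trans (le_of_eq hDeq)
    · rw [Finset.card_image_of_injective B3 σ.injective]
  have hmem3 : ∀ j, σ j ∈ B3 ↔ j ∈ B3 := by
    intro j
    constructor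
    · intro hj
      rw [← himg3'] at hj
      obtain ⟨j0, hj0, he⟩ := Finset.mem_image.mp hj
      rwa [← σ.injective he]
    · intro hj
      rw [← himg3']
      exact Finset.mem_image_of_mem σ hj
  -- lambda
  obtain ⟨lam, hlam, hvlam⟩ : ∃ lam : F, (lam = 1 ∨ lam = -1) ∧ v = lam • eVec k F := by
    rcases hve with hh | hh
    · exact ⟨1, Or.inl rfl, by rw [one_smul]; exact hh⟩
    · exact ⟨-1, Or.inr rfl, by rw [neg_smul, one_smul]; exact hh⟩
  have hlamsq : lam * lam = 1 := by rcases hlam with hh | hh <;> rw [hh] <;> ring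
  have hlamnz : lam ≠ 0 := by
    intro hc; rw [hc, mul_zero] at hlamsq; exact zero_ne_one hlamsq
  have hSe : Matrix.mulVec S (eVec k F) = lam • eVec k F := by
    have h1 : Matrix.mulVec S v = eVec k F := by
      rw [hv, Matrix.mulVec_mulVec, hST, Matrix.one_mulVec]
    rw [hvlam, Matrix.mulVec_smul] at h1
    have h2 := congrArg (fun w => lam • w) h1
    simp only [smul_smul, hlamsq, one_smul] at h2
    exact h2
  have hScol : ∀ i, S i (Fin.last k) = lam * eVec k F i := by
    intro i
    have h1 := congrFun hSe i
    rw [Matrix.mulVec, dotProduct, Fin.sum_univ_castSucc] at h1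
    simp only [eVec_castSucc, mul_zero, Finset.sum_const_zero, zero_add, eVec_last, mul_one] at h1
    rw [h1, Pi.smul_apply, smul_eq_mul]
  have hSlastcol0 : ∀ b : Fin k, S b.castSucc (Fin.last k) = 0 := by
    intro b; rw [hScol, eVec_castSucc, mul_zero]
  have hSll : S (Fin.last k) (Fin.last k) = lam := by
    rw [hScol, eVec_last, mul_one]
  -- duplicates in block 2 of H'
  have hdup : ∀ j : Fin (n + 2 * (n * m) + 1), n ≤ (j : ℕ) → (j : ℕ) < n + n * m →
      m ≤ (Finset.univ.filter fun j'' =>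
        (fun i => construct H m i j'') = (fun i => construct H m i j)).card := by
    intro j hj1 hj2
    have hi1lt : ((j : ℕ) - n) / m < n := (Nat.div_lt_iff_lt_mul hm).mpr (by omega)
    have hi1m : (((j : ℕ) - n) / m) * m + m ≤ n * m := by
      have h2 : (((j : ℕ) - n) / m + 1) * m ≤ n * m := Nat.mul_le_mul_right m hi1lt
      have h3 : (((j : ℕ) - n) / m + 1) * m = (((j : ℕ) - n) / m) * m + m := by ring
      omega
    have hmap : ∀ r : Fin m, n + (((j : ℕ) - n) / m) * m + (r : ℕ) < n + 2 * (n * m) + 1 := by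
      intro r; have := r.isLt; omega
    have hcard : (Finset.univ : Finset (Fin m)).card
        ≤ (Finset.univ.filter fun j'' : Fin (n + 2 * (n * m) + 1) =>
          (fun i => construct H m i j'') = (fun i => construct H m i j)).card := by
      refine Finset.card_le_card_of_injOn
        (fun r : Fin m => (⟨n + (((j : ℕ) - n) / m) * m + (r : ℕ), hmap r⟩ :
          Fin (n + 2 * (n * m) + 1))) ?_ ?_
      · intro r _
        simp only [Finset.mem_coe, Finset.mem_filter, Finset.mem_univ, true_and]
        funext i
        induction i using Fin.lastCases with
        | last =>
          rw [construct_b2_last H (by simp; omega) (by simp; have := r.isLt; omega),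
            construct_b2_last H (by omega) hj2]
        | cast b =>
          have hd1 : ((n + (((j : ℕ) - n) / m) * m + (r : ℕ)) - n) / m = ((j : ℕ) - n) / m := by
            have hr := r.isLt
            have hee : (n + (((j : ℕ) - n) / m) * m + (r : ℕ)) - n
                = m * (((j : ℕ) - n) / m) + (r : ℕ) := by ring_nf; omega
            rw [hee, Nat.mul_add_div hm, Nat.div_eq_of_lt hr, Nat.add_zero]
          have hix : (⟨((n + (((j : ℕ) - n) / m) * m + (r : ℕ)) - n) / m, by
              rw [hd1]; exact hi1lt⟩ : Fin n) = ⟨((j : ℕ) - n) / m, hi1lt⟩ := Fin.ext hd1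
          rw [construct_b2_top H (by simp; omega) (by simp; have := r.isLt; omega) b
              (by rw [hd1]; exact hi1lt),
            construct_b2_top H (by omega) hj2 b hi1lt, hix]
      · intro r1 h1 r2 h2 he
        have hv2 := congrArg Fin.val he
        simp only at hv2
        exact Fin.ext (by omega)
    simpa using hcard
  -- STEP 2 : block 2 maps to block 2
  set B2 : Finset (Fin (n + 2 * (n * m) + 1)) :=
    Finset.univ.filter (fun j => n ≤ (j : ℕ) ∧ (j : ℕ) < n + n * m) with hB2
  have hB2card : B2.card = n * m := by
    rw [hB2, fin_card_mid _ n (n + n * m) (by omega) (by omega)]; omega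
  have hσ2 : ∀ j ∈ B2, σ j ∈ B2 := by
    intro j hj
    rw [hB2, Finset.mem_filter] at hj
    obtain ⟨-, hj1, hj2⟩ := hj
    have h3 : (σ j : ℕ) < n + n * m := by
      by_contra hge
      have hmem : σ j ∈ B3 := by rw [hB3, Finset.mem_filter]; exact ⟨Finset.mem_univ _, hge⟩
      rw [hmem3] at hmem
      rw [hB3, Finset.mem_filter] at hmem
      omega
    rw [hB2, Finset.mem_filter]
    refine ⟨Finset.mem_univ _, ?_, h3⟩
    by_contra h1
    push_neg at h1
    set w : Fin (k + 1) → F := fun i => construct G m i (σ j) with hw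
    have hw1 : w (Fin.last k) = 1 := construct_b1_last G h1
    have hwt : (fun b => w b.castSucc) ≠ (0 : Fin k → F) := by
      intro hc
      apply hGnz ⟨σ j, h1⟩
      funext r
      have hcr := congrFun hc r
      rw [hw] at hcr
      simp only at hcr
      rw [construct_b1_top G h1 r] at hcr
      exact hcr
    have hcard1 := Dset_card_le_max (m := m) G hn w hw1 hwt
    have hTw : Matrix.mulVec T (fun t => construct H m t j) = ε j • w := by
      have h2' := hinvv j
      have h3' := congrArg (fun y => ε j • y) h2'
      simp only [smul_smul, hεsq j, one_smul] at h3'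
      exact h3'.symm
    have hinj : (Finset.univ.filter fun j'' =>
        (fun i => construct H m i j'') = (fun i => construct H m i j)).card
        ≤ (Dset G m w).card := by
      apply Finset.card_le_card_of_injOn σ
      · intro j'' hj''
        simp only [Finset.mem_coe, Finset.mem_filter, Finset.mem_univ, true_and] at hj''
        have h1' := hinvv j''
        rw [hj'', hTw, smul_smul] at h1'
        rw [Finset.mem_coe, Dset, Finset.mem_filter]
        refine ⟨Finset.mem_univ _, ?_⟩
        rcases hε j'' with ha | ha <;> rcases hε j with hb | hb <;>
          rw [ha, hb] at h1'
        · left; rw [h1']; norm_num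
        · right; rw [h1']; norm_num
        · right; rw [h1']; norm_num
        · left; rw [h1']; norm_num
      · exact Set.injOn_of_injective σ.injective
    have hdupj := hdup j hj1 hj2
    have : m ≤ maxColCount G := le_trans hdupj (le_trans hinj hcard1)
    omega
  have himg2 : Finset.image σ B2 = B2 := by
    apply Finset.eq_of_subset_of_card_le
    · intro x hx
      obtain ⟨j, hj, rfl⟩ := Finset.mem_image.mp hx
      exact hσ2 j hj
    · rw [Finset.card_image_of_injective B2 σ.injective]
  have hmem2 : ∀ j, σ j ∈ B2 ↔ j ∈ B2 := by
    intro j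
    constructor
    · intro hj
      rw [← himg2] at hj
      obtain ⟨j0, hj0, he⟩ := Finset.mem_image.mp hj
      rwa [← σ.injective he]
    · intro hj
      rw [← himg2]
      exact Finset.mem_image_of_mem σ hj
  have hσ1 : ∀ j : Fin (n + 2 * (n * m) + 1), (j : ℕ) < n → (σ j : ℕ) < n := by
    intro j hjn
    have h2 : σ j ∉ B2 := by
      rw [hmem2, hB2, Finset.mem_filter]
      intro hc; omega
    have h3 : σ j ∉ B3 := by
      rw [hmem3, hB3, Finset.mem_filter]
      intro hc
      have := hc.2
      omega
    rw [hB2, Finset.mem_filter] at h2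
    rw [hB3, Finset.mem_filter] at h3
    push_neg at h2 h3
    have h2' := h2 (Finset.mem_univ _)
    have h3' := h3 (Finset.mem_univ _)
    omega
  -- STEP 3 : last row of S vanishes on the first k coordinates
  have huG : ∀ i : Fin n, ∑ b : Fin k, S (Fin.last k) b.castSucc * G b i = 0 := by
    intro i
    have him : (i : ℕ) * m + m ≤ n * m := by
      have h2 : ((i : ℕ) + 1) * m ≤ n * m := Nat.mul_le_mul_right m i.isLt
      have h3 : ((i : ℕ) + 1) * m = (i : ℕ) * m + m := by ring
      omega
    have hj'lt : n + (i : ℕ) * m < n + 2 * (n * m) + 1 := by omega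
    set j' : Fin (n + 2 * (n * m) + 1) := ⟨n + (i : ℕ) * m, hj'lt⟩ with hj'
    have hj'B2 : j' ∈ B2 := by
      rw [hB2, Finset.mem_filter]
      refine ⟨Finset.mem_univ _, by simp [hj'], by simp [hj']; omega⟩
    obtain ⟨j, hjB2, hjσ⟩ := Finset.mem_image.mp (himg2 ▸ hj'B2)
    rw [hB2, Finset.mem_filter] at hjB2
    obtain ⟨-, hjn1, hjn2⟩ := hjB2
    have hH0 : construct H m (Fin.last k) j = 0 := construct_b2_last H (by omega) hjn2
    have hc := congrFun (hcolv j) (Fin.last k)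
    rw [hH0] at hc
    have hσj1 : ¬ (σ j : ℕ) < n := by rw [hjσ]; simp [hj']
    have hσj2 : (σ j : ℕ) < n + n * m := by rw [hjσ]; simp [hj']; omega
    have hidx : ((σ j : ℕ) - n) / m = (i : ℕ) := by
      rw [hjσ]
      simp only [hj']
      rw [show n + (i : ℕ) * m - n = m * (i : ℕ) + 0 by ring_nf; omega,
        Nat.mul_add_div hm, Nat.div_eq_of_lt hm, Nat.add_zero]
    have hsum : Matrix.mulVec S (fun t => construct G m t (σ j)) (Fin.last k)
        = ∑ b : Fin k, S (Fin.last k) b.castSucc * G b i := by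
      rw [Matrix.mulVec, dotProduct, Fin.sum_univ_castSucc]
      rw [construct_b2_last G hσj1 hσj2, mul_zero, add_zero]
      apply Finset.sum_congr rfl
      intro b _
      have hix : (⟨((σ j : ℕ) - n) / m, by rw [hidx]; exact i.isLt⟩ : Fin n) = i :=
        Fin.ext hidx
      rw [construct_b2_top G hσj1 hσj2 b (by rw [hidx]; exact i.isLt), hix]
    rw [Pi.smul_apply, hsum, smul_eq_mul] at hc
    rcases mul_eq_zero.mp hc.symm with hc' | hc'
    · exact absurd hc' (hεnz j)
    · exact hc'
  have hu0 : ∀ b : Fin k, S (Fin.last k) b.castSucc = 0 := by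
    have hrange : LinearMap.range G.mulVecLin = ⊤ := by
      apply Submodule.eq_top_of_finrank_eq
      rw [show Module.finrank F ↥(LinearMap.range G.mulVecLin) = G.rank from rfl, hGrank,
        Module.finrank_fintype_fun_eq_card, Fintype.card_fin]
    intro b
    obtain ⟨x, hx⟩ := LinearMap.range_eq_top.mp hrange (Pi.single b 1)
    rw [Matrix.mulVecLin_apply] at hx
    have h1 : dotProduct (fun b : Fin k => S (Fin.last k) b.castSucc) (G.mulVec x)
        = 0 := by
      rw [Matrix.dotProduct_mulVec]
      have hvm : Matrix.vecMul (fun b : Fin k => S (Fin.last k) b.castSucc) G = 0 := by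
        funext i
        rw [Matrix.vecMul, dotProduct]
        exact huG i
      rw [hvm, zero_dotProduct]
    rw [hx] at h1
    simpa [dotProduct, Pi.single_apply, mul_ite] using h1
  -- STEP 4 : all signs on block 1 equal lam
  have hεlam : ∀ j : Fin (n + 2 * (n * m) + 1), (j : ℕ) < n → ε j = lam := by
    intro j hjn
    have hH1 : construct H m (Fin.last k) j = 1 := construct_b1_last H hjn
    have hc := congrFun (hcolv j) (Fin.last k)
    rw [hH1] at hc
    have hσjn := hσ1 j hjn
    have hsum : Matrix.mulVec S (fun t => construct G m t (σ j)) (Fin.last k) = lam := by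
      rw [Matrix.mulVec, dotProduct, Fin.sum_univ_castSucc]
      simp [hu0, construct_b1_last G hσjn, hSll]
    rw [Pi.smul_apply, hsum, smul_eq_mul] at hc
    have h2 := congrArg (fun t => t * lam) hc
    simp only [one_mul, mul_assoc, hlamsq, mul_one] at h2
    exact h2.symm
  -- STEP 5 : build the permutation and conclude
  have hNn : ∀ i : Fin n, (i : ℕ) < n + 2 * (n * m) + 1 := fun i => by have := i.isLt; omega
  set f : Fin n → Fin n := fun i => ⟨(σ ⟨(i : ℕ), hNn i⟩ : ℕ), hσ1 _ i.isLt⟩ with hf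
  have hfinj : Function.Injective f := by
    intro i1 i2 hei
    have h0 : ((f i1 : Fin n) : ℕ) = ((f i2 : Fin n) : ℕ) := congrArg Fin.val hei
    rw [hf] at h0
    simp only at h0
    have h1 : σ ⟨(i1 : ℕ), hNn i1⟩ = σ ⟨(i2 : ℕ), hNn i2⟩ := Fin.ext h0
    have h2 := σ.injective h1
    exact Fin.ext (by simpa using congrArg Fin.val h2)
  have hfbij : Function.Bijective f := Finite.injective_iff_bijective.mp hfinj
  set τ : Equiv.Perm (Fin n) := Equiv.ofBijective f hfbij with hτ
  set S0 : Matrix (Fin k) (Fin k) F := fun a b => lam * S a.castSucc b.castSucc with hS0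
  have hkey : ∀ (a : Fin k) (i : Fin n), H a i = ∑ b : Fin k, S0 a b * G b (f i) := by
    intro a i
    set j : Fin (n + 2 * (n * m) + 1) := ⟨(i : ℕ), hNn i⟩ with hj
    have hjn : (j : ℕ) < n := i.isLt
    have hc := congrFun (hcolv j) a.castSucc
    rw [construct_b1_top H hjn a] at hc
    have hσjn := hσ1 j hjn
    have hsum : Matrix.mulVec S (fun t => construct G m t (σ j)) a.castSucc
        = ∑ b : Fin k, S a.castSucc b.castSucc * G b (f i) := by
      rw [Matrix.mulVec, dotProduct, Fin.sum_univ_castSucc]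
      rw [construct_b1_last G hσjn, hSlastcol0 a, zero_mul, add_zero]
      apply Finset.sum_congr rfl
      intro b _
      rw [construct_b1_top G hσjn b]
    have hHai : H a (⟨(j : ℕ), hjn⟩ : Fin n) = H a i := by
      congr 1
    rw [hεlam j hjn, Pi.smul_apply, hsum, smul_eq_mul, Finset.mul_sum, hHai] at hc
    rw [hc]
    apply Finset.sum_congr rfl
    intro b _
    rw [hS0]
    ring
  have hker : ∀ x : Fin k → F, S0.mulVec x = 0 → x = 0 := by
    intro x hx
    set x' : Fin (k + 1) → F := fun t => if ht : (t : ℕ) < k then x ⟨t, ht⟩ else 0 with hx'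
    have hx'c : ∀ b : Fin k, x' b.castSucc = x b := by
      intro b
      rw [hx']
      simp only
      rw [dif_pos (show ((b.castSucc : Fin (k + 1)) : ℕ) < k from b.isLt)]
      congr 1
    have hx'l : x' (Fin.last k) = 0 := by
      rw [hx']
      simp only
      rw [dif_neg (by simp)]
    have hS0sum : ∀ a : Fin k, ∑ b : Fin k, S a.castSucc b.castSucc * x b = 0 := by
      intro a
      have h0 := congrFun hx a
      rw [Matrix.mulVec, dotProduct] at h0
      simp only [hS0, Pi.zero_apply] at h0
      have h1 : lam * ∑ b : Fin k, S a.castSucc b.castSucc * x b = 0 := by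
        rw [Finset.mul_sum]
        rw [← h0]
        apply Finset.sum_congr rfl
        intro b _
        ring
      rcases mul_eq_zero.mp h1 with hc' | hc'
      · exact absurd hc' hlamnz
      · exact hc'
    have hSx' : Matrix.mulVec S x' = 0 := by
      funext t
      induction t using Fin.lastCases with
      | last =>
        rw [Matrix.mulVec, dotProduct, Fin.sum_univ_castSucc, hx'l, mul_zero, add_zero]
        simp [hu0]
      | cast a =>
        rw [Matrix.mulVec, dotProduct, Fin.sum_univ_castSucc, hx'l, mul_zero, add_zero]
        have := hS0sum a
        simp only [Pi.zero_apply]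
        rw [← this]
        apply Finset.sum_congr rfl
        intro b _
        rw [hx'c b]
    have hx'0 : x' = 0 := by
      have hinjS := Matrix.mulVec_injective_iff_isUnit.mpr hS
      apply hinjS
      rw [hSx', Matrix.mulVec_zero]
    funext b
    rw [← hx'c b, hx'0]
    rfl
  have hS0unit : IsUnit S0 := by
    rw [← Matrix.mulVec_injective_iff_isUnit]
    intro x y hxy
    have h1 : S0.mulVec (x - y) = 0 := by
      rw [Matrix.mulVec_sub, hxy, sub_self]
    exact sub_eq_zero.mp (hker _ h1)
  refine ⟨S0, Matrix.of (fun i j => if i = τ j then 1 else 0), hS0unit, ⟨τ, fun i j => rfl⟩, ?_⟩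
  ext a j
  rw [Matrix.mul_apply]
  simp only [Matrix.of_apply]
  have hterm : ∀ l, (S0 * G) a l * (if l = τ j then 1 else 0)
      = if l = τ j then (S0 * G) a l else 0 := by
    intro l; split_ifs <;> ring
  rw [Finset.sum_congr rfl (fun l _ => hterm l), Finset.sum_ite_eq']
  simp only [Finset.mem_univ, if_true]
  rw [Matrix.mul_apply]
  have hτj : τ j = f j := by rw [hτ, Equiv.ofBijective_apply]
  rw [hτj]
  exact (hkey a j).symm
end

section
/- Let q be a prime power and G, H ∈ 𝔽_q^{k×n} be matrices with no zero columns such that G has full row rank k. Let m be a positive integer with m > m_G and m > m_H, and let G', H' ∈ 𝔽_q^{(k+1)×n'} be obtained from G and H by the Construction (with this m). Then (G, H) is in PCE if and only if (G', H') is in SPCE. -/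
open scoped Classical

set_option linter.unusedSectionVars false

open scoped Matrix
set_option maxHeartbeats 1600000

section AuxHelpers

variable {F : Type*} [Field F] {k n : ℕ}

lemma snoc_eq_snoc_iff {x y : Fin k → F} {a b : F} :
    (Fin.snoc x a : Fin (k+1) → F) = Fin.snoc y b ↔ x = y ∧ a = b := by
  constructor
  · intro h
    refine ⟨funext fun i => ?_, ?_⟩
    · have := congrFun h i.castSucc; simpa using this
    · have := congrFun h (Fin.last k); simpa using this
  · rintro ⟨rfl, rfl⟩; rfl

lemma smul_snoc (c : F) (x : Fin k → F) (a : F) :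
    c • (Fin.snoc x a : Fin (k+1) → F) = Fin.snoc (c • x) (c * a) := by
  funext i
  refine Fin.lastCases ?_ (fun i0 => ?_) i
  · simp
  · simp

lemma neg_snoc (x : Fin k → F) (a : F) :
    -(Fin.snoc x a : Fin (k+1) → F) = Fin.snoc (-x) (-a) := by
  funext i
  refine Fin.lastCases ?_ (fun i0 => ?_) i
  · simp
  · simp

lemma card_fin_filter (N a b : ℕ) :
    (Finset.univ.filter fun j : Fin N => a ≤ (j : ℕ) ∧ (j : ℕ) < b).card = min b N - a := by
  have h1 : (Finset.univ.filter fun j : Fin N => a ≤ (j : ℕ) ∧ (j : ℕ) < b).card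
      = ((Finset.range N).filter fun x => a ≤ x ∧ x < b).card := by
    refine Finset.card_nbij (fun j => (j : ℕ)) ?_ ?_ ?_
    · intro j hj
      simp only [Finset.mem_filter, Finset.mem_range, Finset.mem_univ, true_and] at hj ⊢
      exact Finset.mem_filter.mpr ⟨Finset.mem_range.mpr j.isLt, by simpa using hj⟩
    · intro j1 _ j2 _ h
      exact Fin.ext h
    · intro x hx
      simp only [Finset.coe_filter, Finset.mem_range, Set.mem_image, Set.mem_setOf_eq] at hx ⊢
      obtain ⟨hxN, hx2⟩ := hx
      exact ⟨⟨x, hxN⟩, ⟨by simp, hx2⟩, rfl⟩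
  rw [h1]
  have h2 : ((Finset.range N).filter fun x => a ≤ x ∧ x < b) = Finset.Ico a (min b N) := by
    ext x
    simp only [Finset.mem_filter, Finset.mem_range, Finset.mem_Ico]
    omega
  rw [h2, Nat.card_Ico]

lemma card_fin_filter_le (N a : ℕ) :
    (Finset.univ.filter fun j : Fin N => a ≤ (j : ℕ)).card = N - a := by
  have h : (Finset.univ.filter fun j : Fin N => a ≤ (j : ℕ))
      = (Finset.univ.filter fun j : Fin N => a ≤ (j : ℕ) ∧ (j : ℕ) < N) := by
    apply Finset.filter_congr
    intro j _
    simp [j.isLt]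
  rw [h, card_fin_filter]
  omega

lemma mulVec_snoc (M : Matrix (Fin (k+1)) (Fin (k+1)) F) (x : Fin k → F) (a : F) :
    M.mulVec (Fin.snoc x a) = Fin.snoc
      (fun i => (∑ j, M i.castSucc j.castSucc * x j) + M i.castSucc (Fin.last k) * a)
      ((∑ j, M (Fin.last k) j.castSucc * x j) + M (Fin.last k) (Fin.last k) * a) := by
  funext i
  refine Fin.lastCases ?_ (fun i0 => ?_) i
  · rw [Fin.snoc_last]
    simp [Matrix.mulVec, dotProduct, Fin.sum_univ_castSucc]
  · rw [Fin.snoc_castSucc]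
    simp [Matrix.mulVec, dotProduct, Fin.sum_univ_castSucc]

lemma col_construct₁ (A : Matrix (Fin k) (Fin n) F) (m : ℕ) (j : Fin (n + 2*(n*m)+1))
    (hj : (j : ℕ) < n) :
    (fun i => construct A m i j) = Fin.snoc (fun i => A i ⟨j, hj⟩) 1 := by
  funext i
  refine Fin.lastCases ?_ (fun i0 => ?_) i
  · show construct A m (Fin.last k) j = _
    rw [Fin.snoc_last]
    simp only [construct]
    rw [dif_pos hj, dif_neg (by simp : ¬ ((Fin.last k : Fin (k+1)) : ℕ) < k)]
  · show construct A m i0.castSucc j = _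
    rw [Fin.snoc_castSucc]
    simp only [construct]
    rw [dif_pos hj, dif_pos (show ((i0.castSucc : Fin (k+1)) : ℕ) < k from by
      simpa using i0.isLt)]
    congr 1

lemma col_construct₂ (A : Matrix (Fin k) (Fin n) F) (m : ℕ) (hm : 0 < m)
    (j : Fin (n + 2*(n*m)+1)) (hj1 : ¬ (j : ℕ) < n) (hj2 : (j : ℕ) < n + n*m) :
    (fun i => construct A m i j)
      = Fin.snoc (fun i => A i ⟨((j : ℕ) - n)/m, (Nat.div_lt_iff_lt_mul hm).mpr (by omega)⟩) 0 := by
  funext i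
  refine Fin.lastCases ?_ (fun i0 => ?_) i
  · show construct A m (Fin.last k) j = _
    rw [Fin.snoc_last]
    simp only [construct]
    rw [dif_neg hj1, dif_pos hj2, dif_neg (by simp : ¬ ((Fin.last k : Fin (k+1)) : ℕ) < k)]
  · show construct A m i0.castSucc j = _
    rw [Fin.snoc_castSucc]
    simp only [construct]
    rw [dif_neg hj1, dif_pos hj2, dif_pos (show ((i0.castSucc : Fin (k+1)) : ℕ) < k from by
      simpa using i0.isLt)]
    congr 1

lemma col_construct₃ (A : Matrix (Fin k) (Fin n) F) (m : ℕ)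
    (j : Fin (n + 2*(n*m)+1)) (hj2 : ¬ (j : ℕ) < n + n*m) :
    (fun i => construct A m i j) = Fin.snoc (0 : Fin k → F) 1 := by
  have hj1 : ¬ (j : ℕ) < n := by omega
  funext i
  refine Fin.lastCases ?_ (fun i0 => ?_) i
  · show construct A m (Fin.last k) j = _
    rw [Fin.snoc_last]
    simp only [construct]
    rw [dif_neg hj1, dif_neg hj2, if_neg (by simp : ¬ ((Fin.last k : Fin (k+1)) : ℕ) < k)]
  · show construct A m i0.castSucc j = _
    rw [Fin.snoc_castSucc]
    simp only [construct]
    rw [dif_neg hj1, dif_neg hj2, if_pos (show ((i0.castSucc : Fin (k+1)) : ℕ) < k from by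
      simpa using i0.isLt)]
    simp

lemma mul_permMat_apply (S : Matrix (Fin k) (Fin k) F) (G : Matrix (Fin k) (Fin n) F)
    (σ : Equiv.Perm (Fin n)) (ε : Fin n → F) (i : Fin k) (j : Fin n) :
    (S * G * Matrix.of fun i' j' => if i' = σ j' then ε j' else 0) i j
      = ε j * S.mulVec (fun c => G c (σ j)) i := by
  rw [Matrix.mul_apply]
  have h1 : ∀ l, (S * G) i l * (Matrix.of fun i' j' => if i' = σ j' then ε j' else 0) l j
      = if l = σ j then (S * G) i l * ε j else 0 := by
    intro l
    simp only [Matrix.of_apply]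
    split <;> simp
  rw [Finset.sum_congr rfl (fun l _ => h1 l), Finset.sum_ite_eq' Finset.univ (σ j)]
  simp only [Finset.mem_univ, if_true]
  rw [Matrix.mul_apply, mul_comm]
  congr 1

lemma pce_of_cols (G H : Matrix (Fin k) (Fin n) F) (S : Matrix (Fin k) (Fin k) F)
    (hS : IsUnit S) (σ : Equiv.Perm (Fin n))
    (h : ∀ j, (fun i => H i j) = S.mulVec (fun c => G c (σ j))) : PCE G H := by
  refine ⟨S, Matrix.of fun i' j' => if i' = σ j' then 1 else 0, hS, ⟨σ, fun i j => rfl⟩, ?_⟩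
  ext i j
  rw [mul_permMat_apply S G σ (fun _ => 1) i j]
  have := congrFun (h j) i
  simp only [one_mul]
  exact this.symm

lemma pce_cols (G H : Matrix (Fin k) (Fin n) F) (h : PCE G H) :
    ∃ S : Matrix (Fin k) (Fin k) F, IsUnit S ∧ ∃ σ : Equiv.Perm (Fin n),
      ∀ j, (fun i => H i j) = S.mulVec (fun c => G c (σ j)) := by
  obtain ⟨S, P, hS, ⟨σ, hP⟩, hEq⟩ := h
  refine ⟨S, hS, σ, fun j => ?_⟩
  funext i
  have hPeq : P = Matrix.of fun i' j' => if i' = σ j' then (1 : F) else 0 := by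
    ext i' j'; exact hP i' j'
  rw [← hEq, hPeq, mul_permMat_apply S G σ (fun _ => 1) i j, one_mul]

lemma spce_of_cols (G H : Matrix (Fin k) (Fin n) F) (S : Matrix (Fin k) (Fin k) F)
    (hS : IsUnit S) (σ : Equiv.Perm (Fin n)) (ε : Fin n → F)
    (hε : ∀ j, ε j = 1 ∨ ε j = -1)
    (h : ∀ j, (fun i => H i j) = ε j • S.mulVec (fun c => G c (σ j))) : SPCE G H := by
  refine ⟨S, Matrix.of fun i' j' => if i' = σ j' then ε j' else 0, hS,
    ⟨σ, ε, hε, fun i j => rfl⟩, ?_⟩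
  ext i j
  rw [mul_permMat_apply S G σ ε i j]
  have := congrFun (h j) i
  simp only [Pi.smul_apply, smul_eq_mul] at this
  exact this.symm

lemma spce_cols (G H : Matrix (Fin k) (Fin n) F) (h : SPCE G H) :
    ∃ S : Matrix (Fin k) (Fin k) F, IsUnit S ∧ ∃ (σ : Equiv.Perm (Fin n)) (ε : Fin n → F),
      (∀ j, ε j = 1 ∨ ε j = -1) ∧
      ∀ j, (fun i => H i j) = ε j • S.mulVec (fun c => G c (σ j)) := by
  obtain ⟨S, P, hS, ⟨σ, ε, hε, hP⟩, hEq⟩ := h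
  refine ⟨S, hS, σ, ε, hε, fun j => ?_⟩
  funext i
  have hPeq : P = Matrix.of fun i' j' => if i' = σ j' then ε j' else 0 := by
    ext i' j'; exact hP i' j'
  rw [← hEq, hPeq, mul_permMat_apply S G σ ε i j]
  simp

/-- The permutation on the indices of the constructed matrix induced by `σ`. -/
def bigF {n : ℕ} (m : ℕ) (hm : 0 < m) (σ : Equiv.Perm (Fin n))
    (j : Fin (n + 2*(n*m)+1)) : Fin (n + 2*(n*m)+1) :=
  if h : (j : ℕ) < n then ⟨(σ ⟨j, h⟩ : ℕ), by have := (σ ⟨j, h⟩).isLt; omega⟩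
  else if h2 : (j : ℕ) < n + n*m then
    have hdiv : ((j : ℕ) - n)/m < n := (Nat.div_lt_iff_lt_mul hm).mpr (by omega)
    ⟨n + ((σ ⟨((j : ℕ) - n)/m, hdiv⟩ : Fin n) : ℕ) * m + ((j : ℕ) - n) % m, by
      have h3 : ((σ ⟨((j : ℕ) - n)/m, hdiv⟩ : Fin n) : ℕ) < n := (σ _).isLt
      have h4 : ((j : ℕ) - n) % m < m := Nat.mod_lt _ hm
      have h5 : (((σ ⟨((j : ℕ) - n)/m, hdiv⟩ : Fin n) : ℕ) + 1) * m ≤ n * m :=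
        Nat.mul_le_mul_right m (Nat.succ_le_of_lt h3)
      rw [Nat.succ_mul] at h5
      omega⟩
  else j

lemma bigF_apply₁ {n : ℕ} (m : ℕ) (hm : 0 < m) (σ : Equiv.Perm (Fin n))
    (j : Fin (n + 2*(n*m)+1)) (h : (j : ℕ) < n) :
    ((bigF m hm σ j : Fin (n + 2*(n*m)+1)) : ℕ) = ((σ ⟨j, h⟩ : Fin n) : ℕ) := by
  simp only [bigF, dif_pos h]

lemma bigF_apply₂ {n : ℕ} (m : ℕ) (hm : 0 < m) (σ : Equiv.Perm (Fin n))
    (j : Fin (n + 2*(n*m)+1)) (h1 : ¬ (j : ℕ) < n) (h2 : (j : ℕ) < n + n*m)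
    (hdiv : ((j : ℕ) - n)/m < n) :
    ((bigF m hm σ j : Fin (n + 2*(n*m)+1)) : ℕ)
      = n + ((σ ⟨((j : ℕ) - n)/m, hdiv⟩ : Fin n) : ℕ) * m + ((j : ℕ) - n) % m := by
  simp only [bigF, dif_neg h1, dif_pos h2]

lemma bigF_apply₃ {n : ℕ} (m : ℕ) (hm : 0 < m) (σ : Equiv.Perm (Fin n))
    (j : Fin (n + 2*(n*m)+1)) (h2 : ¬ (j : ℕ) < n + n*m) :
    bigF m hm σ j = j := by
  have h1 : ¬ (j : ℕ) < n := by omega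
  simp only [bigF, dif_neg h1, dif_neg h2]

lemma bigF_range₂ {n : ℕ} (m : ℕ) (hm : 0 < m) (σ : Equiv.Perm (Fin n))
    (j : Fin (n + 2*(n*m)+1)) (h1 : ¬ (j : ℕ) < n) (h2 : (j : ℕ) < n + n*m) :
    n ≤ ((bigF m hm σ j : Fin (n + 2*(n*m)+1)) : ℕ)
      ∧ ((bigF m hm σ j : Fin (n + 2*(n*m)+1)) : ℕ) < n + n*m := by
  have hdiv : ((j : ℕ) - n)/m < n := (Nat.div_lt_iff_lt_mul hm).mpr (by omega)
  rw [bigF_apply₂ m hm σ j h1 h2 hdiv]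
  have h3 : ((σ ⟨((j : ℕ) - n)/m, hdiv⟩ : Fin n) : ℕ) < n := (σ _).isLt
  have h4 : ((j : ℕ) - n) % m < m := Nat.mod_lt _ hm
  have h5 : (((σ ⟨((j : ℕ) - n)/m, hdiv⟩ : Fin n) : ℕ) + 1) * m ≤ n * m :=
    Nat.mul_le_mul_right m (Nat.succ_le_of_lt h3)
  rw [Nat.succ_mul] at h5
  omega

lemma bigF_injective {n : ℕ} (m : ℕ) (hm : 0 < m) (σ : Equiv.Perm (Fin n)) :
    Function.Injective (bigF m hm σ) := by
  intro a b hab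
  have hv := congrArg Fin.val hab
  by_cases ha1 : (a : ℕ) < n
  · by_cases hb1 : (b : ℕ) < n
    · rw [bigF_apply₁ m hm σ a ha1, bigF_apply₁ m hm σ b hb1] at hv
      have heq : (⟨(a : ℕ), ha1⟩ : Fin n) = ⟨(b : ℕ), hb1⟩ := σ.injective (Fin.ext hv)
      have hv2 : (a : ℕ) = (b : ℕ) := congrArg (fun z : Fin n => (z : ℕ)) heq
      exact Fin.ext hv2
    · by_cases hb2 : (b : ℕ) < n + n*m
      · rw [bigF_apply₁ m hm σ a ha1] at hv
        have := (bigF_range₂ m hm σ b hb1 hb2).1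
        have := (σ ⟨a, ha1⟩).isLt
        omega
      · rw [bigF_apply₁ m hm σ a ha1, bigF_apply₃ m hm σ b hb2] at hv
        have := (σ ⟨a, ha1⟩).isLt
        omega
  · by_cases ha2 : (a : ℕ) < n + n*m
    · by_cases hb1 : (b : ℕ) < n
      · rw [bigF_apply₁ m hm σ b hb1] at hv
        have := (bigF_range₂ m hm σ a ha1 ha2).1
        have := (σ ⟨b, hb1⟩).isLt
        omega
      · by_cases hb2 : (b : ℕ) < n + n*m
        · have hadiv : ((a : ℕ) - n)/m < n := (Nat.div_lt_iff_lt_mul hm).mpr (by omega)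
          have hbdiv : ((b : ℕ) - n)/m < n := (Nat.div_lt_iff_lt_mul hm).mpr (by omega)
          rw [bigF_apply₂ m hm σ a ha1 ha2 hadiv, bigF_apply₂ m hm σ b hb1 hb2 hbdiv] at hv
          set x := ((σ ⟨((a : ℕ) - n)/m, hadiv⟩ : Fin n) : ℕ) with hx
          set y := ((σ ⟨((b : ℕ) - n)/m, hbdiv⟩ : Fin n) : ℕ) with hy
          have hra : ((a : ℕ) - n) % m < m := Nat.mod_lt _ hm
          have hrb : ((b : ℕ) - n) % m < m := Nat.mod_lt _ hm
          have hxy : x = y := by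
            have h1 : (x * m + ((a : ℕ) - n) % m) / m = x := by
              rw [mul_comm, Nat.mul_add_div hm, Nat.div_eq_of_lt hra, add_zero]
            have h2 : (y * m + ((b : ℕ) - n) % m) / m = y := by
              rw [mul_comm, Nat.mul_add_div hm, Nat.div_eq_of_lt hrb, add_zero]
            have h3 : x * m + ((a : ℕ) - n) % m = y * m + ((b : ℕ) - n) % m := by omega
            rw [← h1, h3, h2]
          have hmod : ((a : ℕ) - n) % m = ((b : ℕ) - n) % m := by
            rw [hxy] at hv; omega
          have hdiveq : ((a : ℕ) - n)/m = ((b : ℕ) - n)/m := by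
            have hσ : σ ⟨((a : ℕ) - n)/m, hadiv⟩ = σ ⟨((b : ℕ) - n)/m, hbdiv⟩ := Fin.ext hxy
            have := σ.injective hσ
            exact congrArg (fun z : Fin n => (z : ℕ)) this
          have hda := Nat.div_add_mod ((a : ℕ) - n) m
          have hdb := Nat.div_add_mod ((b : ℕ) - n) m
          rw [hdiveq, hmod] at hda
          apply Fin.ext
          omega
        · rw [bigF_apply₃ m hm σ b hb2] at hv
          have := (bigF_range₂ m hm σ a ha1 ha2).2
          omega
    · by_cases hb2 : (b : ℕ) < n + n*m
      · by_cases hb1 : (b : ℕ) < n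
        · rw [bigF_apply₁ m hm σ b hb1, bigF_apply₃ m hm σ a ha2] at hv
          have := (σ ⟨b, hb1⟩).isLt
          omega
        · rw [bigF_apply₃ m hm σ a ha2] at hv
          have := (bigF_range₂ m hm σ b hb1 hb2).2
          omega
      · rw [bigF_apply₃ m hm σ a ha2, bigF_apply₃ m hm σ b hb2] at hab
        exact hab

lemma count_lemma {k n : ℕ} {F : Type*} [Field F] (A : Matrix (Fin k) (Fin n) F)
    (m : ℕ) (hm : 0 < m) (v : Fin (k+1) → F)
    (hcard : n*m + 1 ≤ (Finset.univ.filter fun p : Fin (n + 2*(n*m)+1) =>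
        (fun i => construct A m i p) = v ∨ (fun i => construct A m i p) = -v).card) :
    v = Fin.snoc (0 : Fin k → F) (1 : F) ∨ v = -(Fin.snoc (0 : Fin k → F) (1 : F)) := by
  classical
  by_contra hv
  push_neg at hv
  obtain ⟨hv1, hv2⟩ := hv
  set U := (Finset.univ.filter fun p : Fin (n + 2*(n*m)+1) =>
      (fun i => construct A m i p) = v ∨ (fun i => construct A m i p) = -v) with hU
  have hnot3 : ∀ p ∈ U, (p : ℕ) < n + n*m := by
    intro p hp
    by_contra h3
    have hcol := col_construct₃ A m p (by omega)
    rw [hU, Finset.mem_filter] at hp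
    rcases hp.2 with h | h
    · exact hv1 (by rw [← h, hcol])
    · apply hv2
      rw [hcol] at h
      have h2 := congrArg Neg.neg h
      simp only [neg_neg] at h2
      exact h2.symm
  by_cases h2 : ∃ p ∈ U, n ≤ (p : ℕ)
  · obtain ⟨p0, hp0U, hp0⟩ := h2
    have hp0lt := hnot3 p0 hp0U
    have hcol0 := col_construct₂ A m hm p0 (by omega) hp0lt
    have hvlast : v (Fin.last k) = 0 := by
      rw [hU, Finset.mem_filter] at hp0U
      rcases hp0U.2 with h | h
      · rw [hcol0] at h
        have := congrFun h (Fin.last k)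
        simpa using this.symm
      · rw [hcol0] at h
        have := congrFun h (Fin.last k)
        simp only [Fin.snoc_last, Pi.neg_apply] at this
        exact neg_eq_zero.mp this.symm
    have hsub : U ⊆ Finset.univ.filter
        (fun p : Fin (n + 2*(n*m)+1) => n ≤ (p : ℕ) ∧ (p : ℕ) < n + n*m) := by
      intro p hp
      rw [Finset.mem_filter]
      refine ⟨Finset.mem_univ _, ?_, hnot3 p hp⟩
      by_contra hlt
      push_neg at hlt
      have hcolp := col_construct₁ A m p hlt
      rw [hU, Finset.mem_filter] at hp
      rcases hp.2 with h | h
      · rw [hcolp] at h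
        have := congrFun h (Fin.last k)
        simp only [Fin.snoc_last] at this
        rw [← this] at hvlast
        exact one_ne_zero hvlast
      · rw [hcolp] at h
        have := congrFun h (Fin.last k)
        simp only [Fin.snoc_last, Pi.neg_apply] at this
        rw [hvlast] at this
        simp at this
    have hcardU : U.card ≤ n*m := by
      have hle := Finset.card_le_card hsub
      rw [card_fin_filter] at hle
      omega
    omega
  · push_neg at h2
    have hsub : U ⊆ Finset.univ.filter
        (fun p : Fin (n + 2*(n*m)+1) => 0 ≤ (p : ℕ) ∧ (p : ℕ) < n) := by
      intro p hp
      rw [Finset.mem_filter]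
      exact ⟨Finset.mem_univ _, Nat.zero_le _, h2 p hp⟩
    have hcardU : U.card ≤ n := by
      have hle := Finset.card_le_card hsub
      rw [card_fin_filter] at hle
      omega
    have : n * 1 ≤ n * m := Nat.mul_le_mul_left n hm
    omega

end AuxHelpers

/-- `(G, H)` is in PCE if and only if `(G', H')` is in SPCE. -/
theorem stmt13 (q k n m : ℕ) (hq : IsPrimePow q) (hk : 0 < k) (hn : 0 < n) (hm : 0 < m)
    (F : Type*) [Field F] [Fintype F] (hF : Fintype.card F = q)
    (G H : Matrix (Fin k) (Fin n) F)
    (hGnz : ∀ j, (fun i => G i j) ≠ 0)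
    (hHnz : ∀ j, (fun i => H i j) ≠ 0)
    (hGrank : G.rank = k)
    (hmG : maxColCount G < m) (hmH : maxColCount H < m) :
    PCE G H ↔ SPCE (construct G m) (construct H m) := by
  classical
  constructor
  · -- Forward direction
    intro hpce
    obtain ⟨S, hS, σ, hcols⟩ := pce_cols G H hpce
    set S' : Matrix (Fin (k+1)) (Fin (k+1)) F := Matrix.of (fun i j =>
      if hi : (i : ℕ) < k then (if hj : (j : ℕ) < k then S ⟨i, hi⟩ ⟨j, hj⟩ else 0)
      else (if (j : ℕ) < k then 0 else 1)) with hS'def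
    have hclt : ∀ i0 : Fin k, ((i0.castSucc : Fin (k+1)) : ℕ) < k := by
      intro i0; simpa using i0.isLt
    have hS'e1 : ∀ (i0 j0 : Fin k), S' i0.castSucc j0.castSucc = S i0 j0 := by
      intro i0 j0
      rw [hS'def]
      simp only [Matrix.of_apply]
      rw [dif_pos (hclt i0), dif_pos (hclt j0)]
      exact congr (congrArg S (Fin.ext (by simp))) (Fin.ext (by simp))
    have hS'e2 : ∀ (i0 : Fin k), S' i0.castSucc (Fin.last k) = 0 := by
      intro i0
      rw [hS'def]
      simp only [Matrix.of_apply]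
      rw [dif_pos (hclt i0), dif_neg (by simp : ¬ ((Fin.last k : Fin (k+1)) : ℕ) < k)]
    have hS'e3 : ∀ (j0 : Fin k), S' (Fin.last k) j0.castSucc = 0 := by
      intro j0
      rw [hS'def]
      simp only [Matrix.of_apply]
      rw [dif_neg (by simp : ¬ ((Fin.last k : Fin (k+1)) : ℕ) < k), if_pos (hclt j0)]
    have hS'e4 : S' (Fin.last k) (Fin.last k) = 1 := by
      rw [hS'def]
      simp only [Matrix.of_apply]
      rw [dif_neg (by simp : ¬ ((Fin.last k : Fin (k+1)) : ℕ) < k),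
        if_neg (by simp : ¬ ((Fin.last k : Fin (k+1)) : ℕ) < k)]
    have hmulS' : ∀ (x : Fin k → F) (a : F),
        S'.mulVec (Fin.snoc x a) = Fin.snoc (S.mulVec x) a := by
      intro x a
      rw [mulVec_snoc, snoc_eq_snoc_iff]
      constructor
      · funext i0
        simp only [hS'e1, hS'e2, zero_mul, add_zero, Matrix.mulVec, dotProduct]
      · simp only [hS'e3, hS'e4, zero_mul, Finset.sum_const_zero, one_mul, zero_add]
    have hSinj : Function.Injective S.mulVec := Matrix.mulVec_injective_iff_isUnit.mpr hS
    have hS'unit : IsUnit S' := by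
      apply Matrix.mulVec_injective_iff_isUnit.mp
      intro x y hxy
      rw [← Fin.snoc_init_self x, ← Fin.snoc_init_self y, hmulS', hmulS'] at hxy
      obtain ⟨h1, h2⟩ := snoc_eq_snoc_iff.mp hxy
      rw [← Fin.snoc_init_self x, ← Fin.snoc_init_self y, h2, hSinj h1]
    set σ' : Equiv.Perm (Fin (n + 2*(n*m)+1)) := Equiv.ofBijective (bigF m hm σ)
      ((Finite.injective_iff_bijective).mp (bigF_injective m hm σ)) with hσ'def
    apply spce_of_cols _ _ S' hS'unit σ' (fun _ => 1) (fun _ => Or.inl rfl)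
    intro j
    have hσ'j : σ' j = bigF m hm σ j := rfl
    rw [one_smul]
    by_cases hj1 : (j : ℕ) < n
    · have hb := bigF_apply₁ m hm σ j hj1
      have hlt : ((σ' j : Fin (n + 2*(n*m)+1)) : ℕ) < n := by
        rw [hσ'j, hb]; exact (σ _).isLt
      rw [col_construct₁ H m j hj1, col_construct₁ G m (σ' j) hlt, hmulS']
      rw [snoc_eq_snoc_iff]
      refine ⟨?_, rfl⟩
      have hidx : (⟨((σ' j : Fin (n + 2*(n*m)+1)) : ℕ), hlt⟩ : Fin n) = σ ⟨j, hj1⟩ := by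
        apply Fin.ext
        show ((σ' j : Fin (n + 2*(n*m)+1)) : ℕ) = _
        rw [hσ'j]
        exact hb
      rw [hidx, hcols ⟨j, hj1⟩]
    · by_cases hj2 : (j : ℕ) < n + n*m
      · have hdiv : ((j : ℕ) - n)/m < n := (Nat.div_lt_iff_lt_mul hm).mpr (by omega)
        have hb := bigF_apply₂ m hm σ j hj1 hj2 hdiv
        have hrange := bigF_range₂ m hm σ j hj1 hj2
        have h1' : ¬ ((σ' j : Fin (n + 2*(n*m)+1)) : ℕ) < n := by
          rw [hσ'j]; omega
        have h2' : ((σ' j : Fin (n + 2*(n*m)+1)) : ℕ) < n + n*m := by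
          rw [hσ'j]; exact hrange.2
        have hval : (((σ' j : Fin (n + 2*(n*m)+1)) : ℕ) - n)/m
            = ((σ ⟨((j : ℕ) - n)/m, hdiv⟩ : Fin n) : ℕ) := by
          rw [hσ'j, hb]
          have hstep : n + ((σ ⟨((j : ℕ) - n)/m, hdiv⟩ : Fin n) : ℕ) * m + ((j : ℕ) - n) % m - n
              = ((σ ⟨((j : ℕ) - n)/m, hdiv⟩ : Fin n) : ℕ) * m + ((j : ℕ) - n) % m := by omega
          rw [hstep, mul_comm, Nat.mul_add_div hm, Nat.div_eq_of_lt (Nat.mod_lt _ hm), add_zero]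
        rw [col_construct₂ H m hm j hj1 hj2, col_construct₂ G m hm (σ' j) h1' h2', hmulS']
        rw [snoc_eq_snoc_iff]
        refine ⟨?_, rfl⟩
        rw [hcols]
        have hidx2 : (⟨(((σ' j : Fin (n + 2*(n*m)+1)) : ℕ) - n)/m,
            (Nat.div_lt_iff_lt_mul hm).mpr (by omega)⟩ : Fin n)
            = σ ⟨((j : ℕ) - n)/m, hdiv⟩ := by
          apply Fin.ext
          exact hval
        exact congrArg (fun z : Fin n => S.mulVec (fun c => G c z)) hidx2.symm
      · have hb3 := bigF_apply₃ m hm σ j hj2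
        have h2' : ¬ ((σ' j : Fin (n + 2*(n*m)+1)) : ℕ) < n + n*m := by
          rw [hσ'j, hb3]; exact hj2
        rw [col_construct₃ H m j hj2, col_construct₃ G m (σ' j) h2', hmulS']
        rw [snoc_eq_snoc_iff]
        exact ⟨by rw [Matrix.mulVec_zero], rfl⟩
  · -- Backward direction
    intro hspce
    obtain ⟨S', hS', σ', ε, hε, hcol⟩ := spce_cols _ _ hspce
    have hN : 0 < n*m := Nat.mul_pos hn hm
    have hε2 : ∀ j, ε j * ε j = 1 := by
      intro j; rcases hε j with h|h <;> rw [h] <;> ring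
    have hεne : ∀ j, ε j ≠ 0 := by
      intro j; rcases hε j with h|h <;> rw [h] <;> simp
    have hdet := (Matrix.isUnit_iff_isUnit_det S').mp hS'
    have hS'inj : Function.Injective S'.mulVec := Matrix.mulVec_injective_iff_isUnit.mpr hS'
    set u : Fin (k+1) → F := (S'⁻¹).mulVec (Fin.snoc (0 : Fin k → F) 1) with hu
    have hSu : S'.mulVec u = Fin.snoc (0 : Fin k → F) 1 := by
      rw [hu, Matrix.mulVec_mulVec, Matrix.mul_nonsing_inv S' hdet, Matrix.one_mulVec]
    have hZH : ∀ j : Fin (n + 2*(n*m)+1), ¬ (j : ℕ) < n + n*m →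
        (fun c => construct G m c (σ' j)) = ε j • u := by
      intro j hj
      have h1 := hcol j
      rw [col_construct₃ H m j hj] at h1
      have h2 : S'.mulVec (fun c => construct G m c (σ' j))
          = ε j • (Fin.snoc (0 : Fin k → F) 1 : Fin (k+1) → F) := by
        have h3 := congrArg (fun w => ε j • w) h1
        rw [smul_smul, hε2 j, one_smul] at h3
        exact h3.symm
      have h4 : (fun c => construct G m c (σ' j))
          = (S'⁻¹).mulVec (ε j • (Fin.snoc (0 : Fin k → F) 1 : Fin (k+1) → F)) := by
        rw [← h2, Matrix.mulVec_mulVec, Matrix.nonsing_inv_mul S' hdet, Matrix.one_mulVec]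
      rw [h4, Matrix.mulVec_smul, ← hu]
    set ZH : Finset (Fin (n + 2*(n*m)+1)) :=
      Finset.univ.filter (fun j => n + n*m ≤ (j : ℕ)) with hZHdef
    have hZHcard : ZH.card = n*m + 1 := by
      rw [hZHdef, card_fin_filter_le]; omega
    have hmap : ∀ j ∈ ZH, σ' j ∈ (Finset.univ.filter fun p : Fin (n + 2*(n*m)+1) =>
        (fun i => construct G m i p) = u ∨ (fun i => construct G m i p) = -u) := by
      intro j hj
      rw [hZHdef, Finset.mem_filter] at hj
      have h5 := hZH j (by omega)
      rw [Finset.mem_filter]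
      refine ⟨Finset.mem_univ _, ?_⟩
      rcases hε j with h|h
      · left; rw [h5, h, one_smul]
      · right; rw [h5, h, neg_one_smul]
    have hcardle : n*m + 1 ≤ (Finset.univ.filter fun p : Fin (n + 2*(n*m)+1) =>
        (fun i => construct G m i p) = u ∨ (fun i => construct G m i p) = -u).card := by
      rw [← hZHcard]
      apply Finset.card_le_card_of_injOn σ' hmap
      intro a _ b _ hab; exact σ'.injective hab
    have hu01 := count_lemma G m hm u hcardle
    obtain ⟨t, ht, hust⟩ : ∃ t : F, (t = 1 ∨ t = -1)
        ∧ u = t • (Fin.snoc (0 : Fin k → F) 1 : Fin (k+1) → F) := by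
      rcases hu01 with h|h
      · exact ⟨1, Or.inl rfl, by rw [h, one_smul]⟩
      · exact ⟨-1, Or.inr rfl, by rw [h, neg_one_smul]⟩
    have ht2 : t * t = 1 := by rcases ht with h|h <;> rw [h] <;> ring
    have htne : t ≠ 0 := by rcases ht with h|h <;> rw [h] <;> simp
    have hst : S'.mulVec (Fin.snoc (0 : Fin k → F) 1) = Fin.snoc (0 : Fin k → F) t := by
      have h6 : S'.mulVec (t • u) = t • (Fin.snoc (0 : Fin k → F) 1 : Fin (k+1) → F) := by
        rw [Matrix.mulVec_smul, hSu]
      rw [hust, smul_smul, ht2, one_smul] at h6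
      rw [h6, smul_snoc, smul_zero, mul_one]
    have hEnt := mulVec_snoc S' (0 : Fin k → F) 1
    rw [hst] at hEnt
    obtain ⟨hbcol, htt⟩ := snoc_eq_snoc_iff.mp hEnt
    have hb : ∀ i0 : Fin k, S' i0.castSucc (Fin.last k) = 0 := by
      intro i0
      have h7 := congrFun hbcol i0
      simpa using h7.symm
    have htt' : S' (Fin.last k) (Fin.last k) = t := by
      simpa using htt.symm
    set S0 : Matrix (Fin k) (Fin k) F := Matrix.of (fun i j => S' i.castSucc j.castSucc)
      with hS0
    set r : Fin k → F := fun j => S' (Fin.last k) j.castSucc with hr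
    have hmul : ∀ (x : Fin k → F) (a : F),
        S'.mulVec (Fin.snoc x a) = Fin.snoc (S0.mulVec x) (r ⬝ᵥ x + t * a) := by
      intro x a
      rw [mulVec_snoc, snoc_eq_snoc_iff]
      constructor
      · funext i0
        simp only [hS0, Matrix.of_apply, Matrix.mulVec, dotProduct, hb i0,
          zero_mul, add_zero]
      · simp only [hr, dotProduct, htt']
    have hZG : ∀ p : Fin (n + 2*(n*m)+1),
        ((fun i => construct G m i p) = Fin.snoc (0 : Fin k → F) 1 ∨
         (fun i => construct G m i p) = -(Fin.snoc (0 : Fin k → F) 1)) →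
        n + n*m ≤ (p : ℕ) := by
      intro p hp
      by_contra hlt
      push_neg at hlt
      by_cases h1 : (p : ℕ) < n
      · rw [col_construct₁ G m p h1] at hp
        rcases hp with h|h
        · exact hGnz ⟨p, h1⟩ (snoc_eq_snoc_iff.mp h).1
        · rw [neg_snoc] at h
          obtain ⟨hx, _⟩ := snoc_eq_snoc_iff.mp h
          apply hGnz ⟨p, h1⟩
          rw [hx]; simp
      · rw [col_construct₂ G m hm p h1 hlt] at hp
        rcases hp with h|h
        · exact one_ne_zero (snoc_eq_snoc_iff.mp h).2.symm
        · rw [neg_snoc] at h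
          have h8 : (0 : F) = -1 := (snoc_eq_snoc_iff.mp h).2
          have h9 : (-1 : F) = 0 := h8.symm
          exact one_ne_zero (neg_eq_zero.mp h9)
    have hZHmaps : ∀ j : Fin (n + 2*(n*m)+1), n + n*m ≤ (j : ℕ) →
        n + n*m ≤ ((σ' j : Fin (n + 2*(n*m)+1)) : ℕ) := by
      intro j hj
      apply hZG
      have h5 := hZH j (by omega)
      rw [h5, hust, smul_smul]
      have hcs : ε j * t = 1 ∨ ε j * t = -1 := by
        rcases hε j with h|h <;> rcases ht with h'|h' <;> rw [h, h'] <;> norm_num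
      rcases hcs with hcs|hcs
      · left; rw [hcs, one_smul]
      · right; rw [hcs, neg_one_smul]
    have himgsub : ZH.image σ' ⊆ ZH := by
      intro p hp
      rw [Finset.mem_image] at hp
      obtain ⟨j, hj, rfl⟩ := hp
      rw [hZHdef, Finset.mem_filter] at hj
      rw [hZHdef, Finset.mem_filter]
      exact ⟨Finset.mem_univ _, hZHmaps j hj.2⟩
    have himg : ZH.image σ' = ZH := by
      apply Finset.eq_of_subset_of_card_le himgsub
      rw [Finset.card_image_of_injective _ σ'.injective]
    have hconv : ∀ j : Fin (n + 2*(n*m)+1), (j : ℕ) < n + n*m →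
        ((σ' j : Fin (n + 2*(n*m)+1)) : ℕ) < n + n*m := by
      intro j hj
      by_contra hge
      push_neg at hge
      have hmem : σ' j ∈ ZH := by
        rw [hZHdef, Finset.mem_filter]; exact ⟨Finset.mem_univ _, hge⟩
      rw [← himg, Finset.mem_image] at hmem
      obtain ⟨j0, hj0, hj0eq⟩ := hmem
      have h10 := σ'.injective hj0eq
      rw [hZHdef, Finset.mem_filter] at hj0
      have : (j0 : ℕ) = (j : ℕ) := congrArg Fin.val h10
      omega
    have hr0 : ∀ i0 : Fin n, r ⬝ᵥ (fun i => G i i0) = 0 := by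
      by_contra hcon
      push_neg at hcon
      obtain ⟨i0, hc⟩ := hcon
      set c : F := r ⬝ᵥ (fun i => G i i0) with hcdef
      set w0 : Fin k → F := c⁻¹ • S0.mulVec (fun i => G i i0) with hw0
      have hb1 : ∀ l : Fin m, (i0 : ℕ)*m + (l : ℕ) < n*m := by
        intro l
        have h5 : ((i0 : ℕ)+1) * m ≤ n*m := Nat.mul_le_mul_right m (Nat.succ_le_of_lt i0.isLt)
        have h6 := l.isLt
        have h7 : ((i0 : ℕ)+1) * m = (i0 : ℕ)*m + m := by ring
        omega
      have hQ : ∀ l : Fin m, ∃ q : Fin n,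
          (q : ℕ) = ((σ'.symm ⟨n + (i0 : ℕ)*m + (l : ℕ), by have := hb1 l; omega⟩
            : Fin (n + 2*(n*m)+1)) : ℕ) ∧
          (fun i => H i q) = w0 := by
        intro l
        have hPlt : n + (i0 : ℕ)*m + (l : ℕ) < n + 2*(n*m)+1 := by have := hb1 l; omega
        set P : Fin (n + 2*(n*m)+1) := ⟨n + (i0 : ℕ)*m + (l : ℕ), hPlt⟩ with hP
        set jl := σ'.symm P with hjl
        have hσjl : σ' jl = P := σ'.apply_symm_apply P
        have hPn : ¬ (P : ℕ) < n := by rw [hP]; simp; omega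
        have hPn2 : (P : ℕ) < n + n*m := by rw [hP]; simp; have := hb1 l; omega
        have hPcol : (fun i => construct G m i P) = Fin.snoc (fun i => G i i0) 0 := by
          rw [col_construct₂ G m hm P hPn hPn2]
          rw [snoc_eq_snoc_iff]
          refine ⟨?_, rfl⟩
          funext i
          congr 1
          apply Fin.ext
          show ((P : ℕ) - n)/m = (i0 : ℕ)
          have h11 : (P : ℕ) - n = (i0 : ℕ)*m + (l : ℕ) := by rw [hP]; simp; omega
          rw [h11, mul_comm, Nat.mul_add_div hm, Nat.div_eq_of_lt l.isLt, add_zero]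
        have h1 := hcol jl
        rw [hσjl, hPcol, hmul, mul_zero, add_zero, smul_snoc] at h1
        have hjln : (jl : ℕ) < n := by
          by_contra hge
          push_neg at hge
          by_cases h3 : (jl : ℕ) < n + n*m
          · rw [col_construct₂ H m hm jl (by omega) h3] at h1
            have h12 := (snoc_eq_snoc_iff.mp h1).2
            exact (mul_ne_zero (hεne jl) hc) h12.symm
          · have h13 := hZHmaps jl (by omega)
            rw [hσjl] at h13
            rw [hP] at h13
            simp at h13
            have := hb1 l
            omega
        rw [col_construct₁ H m jl hjln] at h1
        obtain ⟨hcolj, hlast⟩ := snoc_eq_snoc_iff.mp h1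
        have hεjl : ε jl = c⁻¹ := eq_inv_of_mul_eq_one_left hlast.symm
        refine ⟨⟨(jl : ℕ), hjln⟩, rfl, ?_⟩
        rw [hcolj, hεjl, hw0]
      choose g hg1 hg2 using hQ
      have hginj : Function.Injective g := by
        intro l1 l2 hl
        have h1 := hg1 l1
        have h2 := hg1 l2
        rw [hl] at h1
        have hv := h1.symm.trans h2
        have h14 := σ'.symm.injective (Fin.ext hv)
        have h15 := congrArg Fin.val h14
        simp only at h15
        apply Fin.ext
        omega
      have himg2 : Finset.univ.image g ⊆
          Finset.univ.filter (fun q : Fin n => (fun i => H i q) = w0) := by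
        intro q hq
        rw [Finset.mem_image] at hq
        obtain ⟨l, _, rfl⟩ := hq
        rw [Finset.mem_filter]
        exact ⟨Finset.mem_univ _, hg2 l⟩
      have hcnt : m ≤ colCount H w0 := by
        have h1 := Finset.card_le_card himg2
        rw [Finset.card_image_of_injective _ hginj, Finset.card_univ, Fintype.card_fin] at h1
        exact h1
      have hle : colCount H w0 ≤ maxColCount H :=
        Finset.le_sup (f := fun c => colCount H c) (Finset.mem_univ w0)
      omega
    have hmain : ∀ j : Fin n, ∃ q : Fin n,
        (q : ℕ) = ((σ' (Fin.castLE (show n ≤ n + 2*(n*m)+1 by omega) j)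
          : Fin (n + 2*(n*m)+1)) : ℕ) ∧
        (fun i => H i j) = t • S0.mulVec (fun i => G i q) := by
      intro j
      have hjbiglt : (j : ℕ) < n + 2*(n*m)+1 := by have := j.isLt; omega
      set jbig : Fin (n + 2*(n*m)+1) := ⟨(j : ℕ), hjbiglt⟩ with hjbig
      have hjbigval : (jbig : ℕ) = (j : ℕ) := rfl
      have hjbign : (jbig : ℕ) < n := j.isLt
      have hplt : ((σ' jbig : Fin (n + 2*(n*m)+1)) : ℕ) < n + n*m := by
        apply hconv
        rw [hjbigval]
        have := j.isLt
        omega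
      have h1 := hcol jbig
      rw [col_construct₁ H m jbig hjbign] at h1
      by_cases hpn : ((σ' jbig : Fin (n + 2*(n*m)+1)) : ℕ) < n
      · rw [col_construct₁ G m (σ' jbig) hpn, hmul, mul_one, hr0, zero_add, smul_snoc] at h1
        obtain ⟨hcolj, hlast⟩ := snoc_eq_snoc_iff.mp h1
        have hεt : ε jbig = t := by
          have h2 : ε jbig * t = 1 := hlast.symm
          calc ε jbig = ε jbig * (t*t) := by rw [ht2, mul_one]
            _ = (ε jbig * t) * t := by ring
            _ = t := by rw [h2, one_mul]
        refine ⟨⟨((σ' jbig : Fin (n + 2*(n*m)+1)) : ℕ), hpn⟩, rfl, ?_⟩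
        rw [← hεt]
        exact hcolj
      · rw [col_construct₂ G m hm (σ' jbig) hpn hplt, hmul, mul_zero, add_zero, hr0,
          smul_snoc, mul_zero] at h1
        have h12 := (snoc_eq_snoc_iff.mp h1).2
        exact absurd h12 one_ne_zero
    choose q0 hq1 hq2 using hmain
    have hq0inj : Function.Injective q0 := by
      intro j1 j2 hj
      have h1 := hq1 j1
      have h2 := hq1 j2
      rw [hj] at h1
      have hv := h1.symm.trans h2
      have h3 := σ'.injective (Fin.ext hv)
      have h4 := congrArg Fin.val h3
      exact Fin.ext h4
    have hS0inj : Function.Injective S0.mulVec := by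
      intro x y hxy
      have h1 : S'.mulVec (Fin.snoc x 0) = Fin.snoc (S0.mulVec x) (r ⬝ᵥ x) := by
        rw [hmul, mul_zero, add_zero]
      have h2 : S'.mulVec (Fin.snoc y ((r ⬝ᵥ x - r ⬝ᵥ y) * t))
          = Fin.snoc (S0.mulVec y) (r ⬝ᵥ x) := by
        rw [hmul]
        have h5 : r ⬝ᵥ y + t * ((r ⬝ᵥ x - r ⬝ᵥ y) * t) = r ⬝ᵥ x := by
          have h6 : r ⬝ᵥ y + t * ((r ⬝ᵥ x - r ⬝ᵥ y) * t)
              = r ⬝ᵥ y + (r ⬝ᵥ x - r ⬝ᵥ y) * (t * t) := by ring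
          rw [h6, ht2, mul_one]; ring
        rw [h5]
      have h3 : S'.mulVec (Fin.snoc x 0) = S'.mulVec (Fin.snoc y ((r ⬝ᵥ x - r ⬝ᵥ y) * t)) := by
        rw [h1, h2, hxy]
      exact (snoc_eq_snoc_iff.mp (hS'inj h3)).1
    have hSfinal : IsUnit (t • S0) := by
      apply Matrix.mulVec_injective_iff_isUnit.mp
      intro x y hxy
      rw [Matrix.smul_mulVec, Matrix.smul_mulVec] at hxy
      exact hS0inj (smul_right_injective _ htne hxy)
    apply pce_of_cols G H (t • S0) hSfinal
      (Equiv.ofBijective q0 ((Finite.injective_iff_bijective).mp hq0inj))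
    intro j
    rw [Matrix.smul_mulVec]
    exact hq2 j
end
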